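/- Suppose (f_i)_{i≥1} is a sequence of causal functions with values in [0,1] that is dense in the set of all [0,1]-valued causal functions for the topology of uniform convergence on compact sets. If the cone field is K-causal, then f := Σ_{i≥1} 2^{-i} f_i is a time function. -/

import Mathlib

open Manifold Set MeasureTheory Filter

variable {E : Type*} [NormedAddCommGroup E] [NormedSpace ℝ E]
  {H : Type*} [TopologicalSpace H] {I : ModelWithCorners ℝ E H}
  {M : Type*} [TopologicalSpace M] [ChartedSpace H M] [IsManifold I (⊤ : ℕ∞) M]

/-- A closed cone field: each fiber is a convex cone, closed after adding `0`, either
singular (the whole tangent space) or regular (contained in an open half space),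
and the union with the zero section is closed in the tangent bundle. -/
def IsClosedConeField (I : ModelWithCorners ℝ E H) (M : Type*) [TopologicalSpace M]
    [ChartedSpace H M] [IsManifold I (⊤ : ℕ∞) M] (C : ∀ x : M, Set (TangentSpace I x)) : Prop :=
  (∀ x, Convex ℝ (C x)) ∧
  (∀ x, ∀ v ∈ C x, ∀ t : ℝ, 0 < t → t • v ∈ C x) ∧
  (∀ x, IsClosed (insert (0 : TangentSpace I x) (C x))) ∧
  IsClosed {p : TangentBundle I M | p.snd = 0 ∨ p.snd ∈ C p.proj} ∧
  (∀ x : M, C x = Set.univ ∨ ∃ p : TangentSpace I x →L[ℝ] ℝ, ∀ v ∈ C x, 0 < p v)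

/-- A causal curve for the cone field `C` on `[a,b]`: continuous, almost everywhere
differentiable with derivative in the cone (or zero). -/
def IsCausalCurve (C : ∀ x : M, Set (TangentSpace I x)) (γ : ℝ → M) (a b : ℝ) : Prop :=
  ContinuousOn γ (Set.Icc a b) ∧
  ∀ᵐ t ∂(volume.restrict (Set.Icc a b)),
    MDifferentiableAt 𝓘(ℝ, ℝ) I γ t ∧
      mfderiv 𝓘(ℝ, ℝ) I γ t (1 : ℝ) ∈ insert (0 : TangentSpace I (γ t)) (C (γ t))

/-- The causal future of a point. -/
def causalFuture (C : ∀ x : M, Set (TangentSpace I x)) (x : M) : Set M :=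
  insert x {y | ∃ a b : ℝ, a < b ∧ ∃ γ : ℝ → M, IsCausalCurve C γ a b ∧
    γ a = x ∧ γ b = y ∧ ∃ s ∈ Set.Icc a b, ∃ t ∈ Set.Icc a b, γ s ≠ γ t}

/-- A causal function. -/
def IsCausalFun (C : ∀ x : M, Set (TangentSpace I x)) (f : M → ℝ) : Prop :=
  Continuous f ∧ ∀ x, ∀ y ∈ causalFuture C x, f x ≤ f y

/-- A Lyapunov function for `C`. -/
def IsLyapunov (C : ∀ x : M, Set (TangentSpace I x)) (τ : M → ℝ) : Prop :=
  ContMDiff I 𝓘(ℝ, ℝ) (⊤ : ℕ∞) τ ∧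
  ∀ x : M, mfderiv I 𝓘(ℝ, ℝ) τ x ≠ 0 → ∀ v ∈ C x, 0 < show ℝ from mfderiv I 𝓘(ℝ, ℝ) τ x v

/-- A neutral point of a function `f` with respect to `C`. -/
def IsNeutralPt (C : ∀ x : M, Set (TangentSpace I x)) (f : M → ℝ) (x : M) : Prop :=
  C x = Set.univ ∨ ∃ y ∈ causalFuture C x, y ≠ x ∧ f y = f x

/-- A strict value of `f`. -/
def IsStrictValue (C : ∀ x : M, Set (TangentSpace I x)) (f : M → ℝ) (a : ℝ) : Prop :=
  ¬ ∃ x : M, IsNeutralPt C f x ∧ f x = a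

/-- A special causal function. -/
def IsSpecialCausal (C : ∀ x : M, Set (TangentSpace I x)) (f : M → ℝ) : Prop :=
  IsCausalFun C f ∧ Dense {a : ℝ | IsStrictValue C f a}

/-!
Monotonicity along causal curves and continuity pass to the weighted sum termwise. For
strictness, `K`-causality gives, for `y ∈ J⁺(x) \ {x}`, a causal function separating `x` from
`y`; clamped to `[0, 1]` it is still causal, so by density some `fᵢ` approximates it well enough
on `{x, y}` to satisfy `fᵢ x < fᵢ y`, and this one term makes the weighted sum strictly larger.
-/

section WeightedSum

variable {X ι : Type*} {w : ι → ℝ} {f : ι → X → ℝ}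

theorem summable_mul_of_mem_Icc (hw : Summable w) (hw0 : ∀ i, 0 ≤ w i)
    (hf : ∀ i x, f i x ∈ Icc (0 : ℝ) 1) (x : X) : Summable fun i => w i * f i x :=
  .of_nonneg_of_le (fun i => mul_nonneg (hw0 i) (hf i x).1)
    (fun i => mul_le_of_le_one_right (hw0 i) (hf i x).2) hw

theorem continuous_tsum_mul_of_mem_Icc [TopologicalSpace X] (hw : Summable w)
    (hw0 : ∀ i, 0 ≤ w i) (hf : ∀ i x, f i x ∈ Icc (0 : ℝ) 1) (hc : ∀ i, Continuous (f i)) :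
    Continuous fun x => ∑' i, w i * f i x := by
  refine continuous_tsum (fun i => continuous_const.mul (hc i)) hw fun i x => ?_
  rw [Real.norm_eq_abs, abs_of_nonneg (mul_nonneg (hw0 i) (hf i x).1)]
  exact mul_le_of_le_one_right (hw0 i) (hf i x).2

end WeightedSum

section Causal

omit [IsManifold I (⊤ : ℕ∞) M]

variable {C : ∀ x : M, Set (TangentSpace I x)}

theorem IsCausalFun.comp_monotone {g : M → ℝ} (hg : IsCausalFun C g) {φ : ℝ → ℝ}
    (hφ : Monotone φ) (hφc : Continuous φ) : IsCausalFun C (φ ∘ g) :=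
  ⟨hφc.comp hg.1, fun x y hy => hφ (hg.2 x y hy)⟩

theorem IsCausalFun.tsum_mul {ι : Type*} {w : ι → ℝ} {f : ι → M → ℝ} (hw : Summable w)
    (hw0 : ∀ i, 0 ≤ w i) (hf : ∀ i x, f i x ∈ Icc (0 : ℝ) 1) (hcaus : ∀ i, IsCausalFun C (f i)) :
    IsCausalFun C fun x => ∑' i, w i * f i x :=
  ⟨continuous_tsum_mul_of_mem_Icc hw hw0 hf fun i => (hcaus i).1, fun x y hy =>
    (summable_mul_of_mem_Icc hw hw0 hf x).tsum_le_tsum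
      (fun i => mul_le_mul_of_nonneg_left ((hcaus i).2 x y hy) (hw0 i))
      (summable_mul_of_mem_Icc hw hw0 hf y)⟩

theorem exists_isCausalFun_lt_of_mem_causalFuture
    (hK : ∀ x y : M, (∀ g : M → ℝ, IsCausalFun C g → g x ≤ g y) →
      (∀ g : M → ℝ, IsCausalFun C g → g y ≤ g x) → x = y)
    {x y : M} (hy : y ∈ causalFuture C x) (hyx : y ≠ x) :
    ∃ g : M → ℝ, IsCausalFun C g ∧ g x < g y := by
  by_contra! hle
  exact hyx (hK x y (fun g hg => hg.2 x y hy) hle).symm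

theorem exists_isCausalFun_mem_Icc_lt_of_mem_causalFuture
    (hK : ∀ x y : M, (∀ g : M → ℝ, IsCausalFun C g → g x ≤ g y) →
      (∀ g : M → ℝ, IsCausalFun C g → g y ≤ g x) → x = y)
    {x y : M} (hy : y ∈ causalFuture C x) (hyx : y ≠ x) :
    ∃ g : M → ℝ, IsCausalFun C g ∧ (∀ z, g z ∈ Icc (0 : ℝ) 1) ∧ g x < g y := by
  obtain ⟨g, hg, hxy⟩ := exists_isCausalFun_lt_of_mem_causalFuture hK hy hyx
  let φ : ℝ → ℝ := fun t => max 0 (min (t - g x) 1)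
  have hφ : Monotone φ := fun s t hst => by dsimp only [φ]; gcongr
  have hφc : Continuous φ := by fun_prop
  refine ⟨φ ∘ g, hg.comp_monotone hφ hφc, fun z => ⟨le_max_left _ _, ?_⟩, ?_⟩
  · exact max_le zero_le_one (min_le_right _ _)
  · simp only [Function.comp_apply, φ, sub_self, zero_lt_one, min_eq_left_of_lt, max_self]
    exact lt_max_of_lt_right (lt_min (sub_pos.2 hxy) one_pos)

theorem exists_lt_of_dense {f : ℕ → M → ℝ}
    (hdense : ∀ g : M → ℝ, IsCausalFun C g → (∀ x : M, g x ∈ Set.Icc (0 : ℝ) 1) →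
      ∀ K : Set M, IsCompact K → ∀ ε : ℝ, 0 < ε → ∃ i, ∀ x ∈ K, |f i x - g x| < ε)
    {g : M → ℝ} (hg : IsCausalFun C g) (hg01 : ∀ z, g z ∈ Icc (0 : ℝ) 1) {x y : M}
    (hxy : g x < g y) : ∃ i, f i x < f i y := by
  obtain ⟨i, hi⟩ := hdense g hg hg01 {x, y} (Set.toFinite _).isCompact ((g y - g x) / 2)
    (by linarith)
  have hx := abs_lt.1 (hi x (by simp))
  have hy := abs_lt.1 (hi y (by simp))
  exact ⟨i, by linarith [hx.2, hy.1]⟩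

end Causal

theorem dense_sum_is_time_general (C : ∀ x : M, Set (TangentSpace I x))
    (f : ℕ → M → ℝ)
    (hcaus : ∀ i, IsCausalFun C (f i))
    (hval : ∀ i, ∀ x : M, f i x ∈ Set.Icc (0 : ℝ) 1)
    (hdense : ∀ g : M → ℝ, IsCausalFun C g → (∀ x : M, g x ∈ Set.Icc (0 : ℝ) 1) →
      ∀ K : Set M, IsCompact K → ∀ ε : ℝ, 0 < ε → ∃ i, ∀ x ∈ K, |f i x - g x| < ε)
    (hKcausal : ∀ x y : M, (∀ g : M → ℝ, IsCausalFun C g → g x ≤ g y) →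
      (∀ g : M → ℝ, IsCausalFun C g → g y ≤ g x) → x = y) :
    IsCausalFun C (fun x => ∑' i : ℕ, (2 : ℝ)⁻¹ ^ (i + 1) * f i x) ∧
      ∀ x : M, ∀ y ∈ causalFuture C x, y ≠ x →
        (∑' i : ℕ, (2 : ℝ)⁻¹ ^ (i + 1) * f i x) < ∑' i : ℕ, (2 : ℝ)⁻¹ ^ (i + 1) * f i y := by
  have hw : Summable fun i : ℕ => (2 : ℝ)⁻¹ ^ (i + 1) :=
    (summable_nat_add_iff 1).2 (summable_geometric_of_lt_one (by norm_num) (by norm_num))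
  have hw0 : ∀ i : ℕ, 0 < (2 : ℝ)⁻¹ ^ (i + 1) := fun i => by positivity
  have hsum := IsCausalFun.tsum_mul hw (fun i => (hw0 i).le) hval hcaus
  refine ⟨hsum, fun x y hy hyx => ?_⟩
  obtain ⟨g, hg, hg01, hgxy⟩ := exists_isCausalFun_mem_Icc_lt_of_mem_causalFuture hKcausal hy hyx
  obtain ⟨i, hi⟩ := exists_lt_of_dense hdense hg hg01 hgxy
  exact (summable_mul_of_mem_Icc hw (fun j => (hw0 j).le) hval x).tsum_lt_tsum
    (fun j => mul_le_mul_of_nonneg_left ((hcaus j).2 x y hy) (hw0 j).le)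
    (mul_lt_mul_of_pos_left hi (hw0 i)) (summable_mul_of_mem_Icc hw (fun j => (hw0 j).le) hval y)

/-- If `(fᵢ)` is a dense sequence of `[0,1]`-valued causal functions and the cone field is
`K`-causal, then `Σ 2⁻ⁱ fᵢ` is a time function. -/
theorem dense_sum_is_time (C : ∀ x : M, Set (TangentSpace I x))
    (hC : IsClosedConeField I M C) (f : ℕ → M → ℝ)
    (hcaus : ∀ i, IsCausalFun C (f i))
    (hval : ∀ i, ∀ x : M, f i x ∈ Set.Icc (0 : ℝ) 1)
    (hdense : ∀ g : M → ℝ, IsCausalFun C g → (∀ x : M, g x ∈ Set.Icc (0 : ℝ) 1) →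
      ∀ K : Set M, IsCompact K → ∀ ε : ℝ, 0 < ε → ∃ i, ∀ x ∈ K, |f i x - g x| < ε)
    (hKcausal : ∀ x y : M, (∀ g : M → ℝ, IsCausalFun C g → g x ≤ g y) →
      (∀ g : M → ℝ, IsCausalFun C g → g y ≤ g x) → x = y) :
    IsCausalFun C (fun x => ∑' i : ℕ, (2 : ℝ)⁻¹ ^ (i + 1) * f i x) ∧
      ∀ x : M, ∀ y ∈ causalFuture C x, y ≠ x →
        (∑' i : ℕ, (2 : ℝ)⁻¹ ^ (i + 1) * f i x) < ∑' i : ℕ, (2 : ℝ)⁻¹ ^ (i + 1) * f i y :=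
  dense_sum_is_time_general C f hcaus hval hdense hKcausal
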